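/- Fix an integer k ≥ 1 and distinct primes p₁, ..., p_r, each greater than 3. Then, as X → ∞, ∑_{(a,b) ∈ ℤ², max(4|a|³, 27b²) < X} ∏_{j=1}^{r} ℓ_{p_j}(a, b)^k = 2^{4/3}·3^{−3/2}·X^{5/6} · ∏_{j=1}^{r} α(p_j, k) + O(X^{1/2}), where the implied constant depends only on p₁, ..., p_r and k. -/

import Mathlib

/-!
The summand `∏ⱼ ℓ_{pⱼ}(a,b)^k` depends only on `(a, b)` modulo `N = ∏ⱼ pⱼ`, and the region
`h(a,b) < X` is the box `|a| < (X/4)^{1/3}`, `|b| < (X/27)^{1/2}`. Each residue class mod `N`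
meets an interval of length `L` in `L/N + O(1)` points, so the sum of a bounded doubly
`N`-periodic function over a box with sides `L, L'` is `L L'` times its mean over `(ℤ/N)²`, up to
`O(N (L + L'))`. By the Chinese remainder theorem that mean is `∏ⱼ α(pⱼ, k)`, and
`L L' = 4 (X/4)^{1/3} (X/27)^{1/2} + O(X^{1/2}) = 2^{4/3} 3^{-3/2} X^{5/6} + O(X^{1/2})`.
-/

/-- The naive height `h(a,b) = max(4|a|³, 27b²)` of the curve `y² = x³ - ax + b`. -/
def naiveHeight (a b : ℤ) : ℝ :=
  max (4 * |(a : ℝ)| ^ 3) (27 * (b : ℝ) ^ 2)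

/-- `ℓ_p(a,b) = -p^{-1/2} ∑_{x ∈ 𝔽_p} ((x³ - ax + b)/p)`, the normalized `p`-th
coefficient of the curve `y² = x³ - ax + b` mod `p`. -/
noncomputable def ellp (p : ℕ) (hp : p.Prime) (a b : ℤ) : ℝ :=
  -(p : ℝ) ^ (-(1 / 2) : ℝ) *
    ∑ x ∈ Finset.range p, (@legendreSym p ⟨hp⟩ ((x : ℤ) ^ 3 - a * x + b) : ℝ)

/-- `α(p,k) = p^{-2} ∑_{(a,b) ∈ 𝔽_p²} ℓ_p(a,b)^k`. -/
noncomputable def alphaMoment (p : ℕ) (hp : p.Prime) (k : ℕ) : ℝ :=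
  ((p : ℝ) ^ 2)⁻¹ *
    ∑ a ∈ Finset.range p, ∑ b ∈ Finset.range p, ellp p hp (a : ℤ) (b : ℤ) ^ k

open Finset Function

theorem abs_mul_sub_mul_le {x x' w w' : ℝ} (hx : |x - x'| ≤ 1) (hw : |w - w'| ≤ 1) :
    |x * w - x' * w'| ≤ |x'| + |w'| + 1 := by
  calc |x * w - x' * w'| = |(x - x') * w' + x' * (w - w') + (x - x') * (w - w')| := by ring_nf
    _ ≤ |x - x'| * |w'| + |x'| * |w - w'| + |x - x'| * |w - w'| := by
        simpa only [abs_mul] using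
          abs_add_three ((x - x') * w') (x' * (w - w')) ((x - x') * (w - w'))
    _ ≤ 1 * |w'| + |x'| * 1 + 1 * 1 := by gcongr
    _ = |x'| + |w'| + 1 := by ring

theorem Int.abs_card_filter_Ico_modEq_sub_le {a b r : ℤ} (hr : 0 < r) (hab : a ≤ b) (v : ℤ) :
    |(#{x ∈ Ico a b | x ≡ v [ZMOD r]} : ℚ) - (b - a) / r| ≤ 1 := by
  have hmono : ⌈(a - v) / (r : ℚ)⌉ ≤ ⌈(b - v) / (r : ℚ)⌉ := by gcongr
  rw [← Int.cast_natCast, Int.Ico_filter_modEq_card _ _ hr, max_eq_left (sub_nonneg.2 hmono),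
    show ((b : ℚ) - a) / r = (b - v) / r - (a - v) / r by ring, abs_le]
  have h₁ := Int.le_ceil ((a - v) / (r : ℚ))
  have h₂ := Int.ceil_lt_add_one ((a - v) / (r : ℚ))
  have h₃ := Int.le_ceil ((b - v) / (r : ℚ))
  have h₄ := Int.ceil_lt_add_one ((b - v) / (r : ℚ))
  push_cast
  constructor <;> linarith

namespace Function.Periodic

variable {R : Type*} {f : ℤ → R}

theorem apply_eq_of_modEq {n : ℕ} (hf : Periodic f n) {a b : ℤ} (h : a ≡ b [ZMOD n]) :
    f a = f b := by
  obtain ⟨m, hm⟩ := h.dvd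
  rw [show b = a + m • (n : ℤ) by rw [smul_eq_mul]; linarith, hf.zsmul m a]

theorem apply_val_intCast {n : ℕ} [NeZero n] (hf : Periodic f n) (a : ℤ) :
    f ((a : ZMod n).val) = f a :=
  hf.apply_eq_of_modEq (by rw [ZMod.val_intCast]; exact Int.mod_modEq a n)

theorem of_dvd {m n : ℤ} (hf : Periodic f m) (h : m ∣ n) : Periodic f n := by
  obtain ⟨c, rfl⟩ := h
  simpa only [smul_eq_mul, mul_comm] using hf.zsmul c

theorem sum_Ico_eq_sum_range_card_nsmul [AddCommMonoid R] {N : ℕ} (hf : Periodic f N)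
    (hN : 0 < N) (l u : ℤ) :
    ∑ a ∈ Ico l u, f a = ∑ c ∈ range N, #{a ∈ Ico l u | a ≡ c [ZMOD N]} • f c := by
  have hmaps : ∀ a ∈ Ico l u, (a % N).toNat ∈ range N := fun a _ => by
    have := Int.emod_lt_of_pos a (Int.natCast_pos.2 hN)
    rw [mem_range]; omega
  rw [← sum_fiberwise_of_maps_to hmaps]
  refine sum_congr rfl fun c hc => ?_
  have hc : ((c : ℤ) % N) = c := Int.emod_eq_of_lt (by omega) (by simpa using hc)
  have hfilter : {a ∈ Ico l u | (a % (N : ℤ)).toNat = c} = {a ∈ Ico l u | a ≡ c [ZMOD N]} := by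
    refine filter_congr fun a _ => ?_
    have := Int.emod_nonneg a (Int.natCast_ne_zero.2 hN.ne')
    rw [Int.ModEq, hc]; omega
  rw [hfilter, ← sum_const]
  exact sum_congr rfl fun a ha => hf.apply_eq_of_modEq (mem_filter.1 ha).2

theorem abs_sum_Ico_sub_le {g : ℤ → ℝ} {N : ℕ} (hg : Periodic g N) (hN : 0 < N) {M : ℝ}
    (hM : ∀ a, |g a| ≤ M) {l u : ℤ} (hlu : l ≤ u) :
    |∑ a ∈ Ico l u, g a - (u - l) / N * ∑ c ∈ range N, g c| ≤ N * M := by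
  rw [hg.sum_Ico_eq_sum_range_card_nsmul hN, mul_sum, ← sum_sub_distrib]
  calc |∑ c ∈ range N, (#{a ∈ Ico l u | a ≡ c [ZMOD N]} • g c - (u - l) / N * g c)|
      ≤ ∑ c ∈ range N, 1 * M := by
        refine (abs_sum_le_sum_abs _ _).trans (sum_le_sum fun c _ => ?_)
        rw [nsmul_eq_mul, ← sub_mul, abs_mul]
        have hcount : |(#{a ∈ Ico l u | a ≡ c [ZMOD N]} : ℝ) - (u - l) / N| ≤ 1 := by
          exact_mod_cast Int.abs_card_filter_Ico_modEq_sub_le (Int.natCast_pos.2 hN) hlu c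
        exact mul_le_mul hcount (hM c) (abs_nonneg _) zero_le_one
    _ = N * M := by simp

end Function.Periodic

theorem periodic_prod_of_dvd {ι R : Type*} [CommMonoid R] (s : Finset ι) {f : ι → ℤ → R}
    {c : ι → ℤ} {n : ℤ} (hf : ∀ i ∈ s, Periodic (f i) (c i)) (hc : ∀ i ∈ s, c i ∣ n) :
    Periodic (fun a => ∏ i ∈ s, f i a) n :=
  fun a => prod_congr rfl fun i hi => (hf i hi).of_dvd (hc i hi) a

theorem sum_range_eq_sum_zmod_val {M : Type*} [AddCommMonoid M] (n : ℕ) [NeZero n]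
    (g : ℕ → M) : ∑ a ∈ range n, g a = ∑ x : ZMod n, g x.val := by
  obtain ⟨n, rfl⟩ := Nat.exists_eq_succ_of_ne_zero (NeZero.ne n)
  exact (Fin.sum_univ_eq_sum_range g _).symm

section ChineseRemainder

variable {ι R : Type*} [Fintype ι] [CommSemiring R] {m : ι → ℕ} [∀ i, NeZero (m i)]

theorem sum_range_prod_eq_prod_sum_range_of_periodic (hm : Pairwise (Nat.Coprime on m))
    {f : ι → ℤ → R} (hf : ∀ i, Periodic (f i) (m i)) :
    ∑ a ∈ range (∏ i, m i), ∏ i, f i a = ∏ i, ∑ a ∈ range (m i), f i a := by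
  classical
  have : NeZero (∏ i, m i) := ⟨prod_ne_zero_iff.2 fun i _ => NeZero.ne (m i)⟩
  let e := (ZMod.prodEquivPi m hm).toEquiv
  have hval : ∀ (x : ZMod (∏ i, m i)) i, f i ((e x i).val) = f i x.val := fun x i => by
    have : e x i = ((x.val : ℤ) : ZMod (m i)) := by
      rw [Int.cast_natCast, ZMod.natCast_val]
      exact ZMod.prodEquivPi_apply m hm x i
    rw [this, (hf i).apply_val_intCast]
  calc ∑ a ∈ range (∏ i, m i), ∏ i, f i a
      = ∑ x : ZMod (∏ i, m i), ∏ i, f i ((e x i).val) := by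
        rw [sum_range_eq_sum_zmod_val]; simp only [hval]
    _ = ∑ y : ∀ i, ZMod (m i), ∏ i, f i (y i).val := e.sum_comp fun y => ∏ i, f i (y i).val
    _ = ∏ i, ∑ a ∈ range (m i), f i a := by
        rw [← Fintype.prod_sum fun i (y : ZMod (m i)) => f i y.val]
        simp only [sum_range_eq_sum_zmod_val]

theorem sum_range_sum_range_prod_eq_prod_of_periodic (hm : Pairwise (Nat.Coprime on m))
    {f : ι → ℤ → ℤ → R} (hf₁ : ∀ i b, Periodic (f i · b) (m i))
    (hf₂ : ∀ i a, Periodic (f i a) (m i)) :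
    ∑ a ∈ range (∏ i, m i), ∑ b ∈ range (∏ i, m i), ∏ i, f i a b =
      ∏ i, ∑ a ∈ range (m i), ∑ b ∈ range (m i), f i a b := by
  rw [sum_congr rfl fun (a : ℕ) _ => sum_range_prod_eq_prod_sum_range_of_periodic hm (hf₂ · a)]
  exact sum_range_prod_eq_prod_sum_range_of_periodic hm
    (f := fun i a => ∑ b ∈ range (m i), f i a b) fun i a => sum_congr rfl fun b _ => hf₁ i b a

end ChineseRemainder

theorem Int.abs_ceil_sub_one_sub_ceil_sub_two_mul_le (t : ℝ) :
    |((⌈t⌉ : ℝ) - ((1 - ⌈t⌉ : ℤ) : ℝ)) - 2 * t| ≤ 1 := by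
  have h₁ := Int.le_ceil t
  have h₂ := Int.ceil_lt_add_one t
  rw [abs_le]; push_cast; constructor <;> linarith

theorem abs_intCast_lt_iff_mem_Ico_ceil (t : ℝ) (a : ℤ) :
    |(a : ℝ)| < t ↔ a ∈ Ico (1 - ⌈t⌉) ⌈t⌉ := by
  rw [abs_lt, mem_Ico, neg_lt, ← Int.cast_neg, ← Int.lt_ceil, ← Int.lt_ceil]
  omega

theorem naiveHeight_lt_iff {X : ℝ} (hX : 0 ≤ X) (a b : ℤ) :
    naiveHeight a b < X ↔ |(a : ℝ)| < (X / 4) ^ (3⁻¹ : ℝ) ∧ |(b : ℝ)| < (X / 27) ^ (2⁻¹ : ℝ) := by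
  rw [naiveHeight, max_lt_iff,
    Real.lt_rpow_inv_iff_of_pos (abs_nonneg _) (by positivity) (by norm_num),
    Real.lt_rpow_inv_iff_of_pos (abs_nonneg _) (by positivity) (by norm_num),
    lt_div_iff₀' (by norm_num), lt_div_iff₀' (by norm_num)]
  norm_cast
  rw [sq_abs]

theorem setOf_naiveHeight_lt {X : ℝ} (hX : 0 ≤ X) :
    {q : ℤ × ℤ | naiveHeight q.1 q.2 < X} =
      ↑(Ico (1 - ⌈(X / 4) ^ (3⁻¹ : ℝ)⌉) ⌈(X / 4) ^ (3⁻¹ : ℝ)⌉ ×ˢ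
        Ico (1 - ⌈(X / 27) ^ (2⁻¹ : ℝ)⌉) ⌈(X / 27) ^ (2⁻¹ : ℝ)⌉) := by
  ext ⟨a, b⟩
  simp only [Set.mem_ofPred_eq, naiveHeight_lt_iff hX, coe_product, Set.mem_prod, mem_coe,
    abs_intCast_lt_iff_mem_Ico_ceil]

theorem four_mul_rpow_three_inv_mul_rpow_two_inv {X : ℝ} (hX : 0 ≤ X) :
    4 * ((X / 4) ^ (3⁻¹ : ℝ) * (X / 27) ^ (2⁻¹ : ℝ)) =
      (2 : ℝ) ^ (4 / 3 : ℝ) * (3 : ℝ) ^ (-(3 / 2) : ℝ) * X ^ (5 / 6 : ℝ) := by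
  have h2 : (2 : ℝ) ^ (4 / 3 : ℝ) = 4 / 4 ^ (3⁻¹ : ℝ) := by
    rw [eq_div_iff (by positivity), show (4 : ℝ) = 2 ^ (2 : ℝ) by norm_num,
      ← Real.rpow_mul (by norm_num), ← Real.rpow_add (by norm_num)]
    norm_num
  have h3 : (3 : ℝ) ^ (-(3 / 2) : ℝ) = 1 / 27 ^ (2⁻¹ : ℝ) := by
    rw [eq_div_iff (by positivity), show (27 : ℝ) = 3 ^ (3 : ℝ) by norm_num,
      ← Real.rpow_mul (by norm_num), ← Real.rpow_add (by norm_num)]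
    norm_num
  rw [Real.div_rpow hX (by norm_num), Real.div_rpow hX (by norm_num), h2, h3,
    show (5 / 6 : ℝ) = 3⁻¹ + 2⁻¹ by norm_num, Real.rpow_add' hX (by norm_num)]
  ring

section DoublyPeriodic

variable {G : ℤ → ℤ → ℝ} {N : ℕ} {M : ℝ}

theorem abs_sum_Ico_Ico_sub_le_of_periodic (hG₁ : ∀ b, Periodic (G · b) N)
    (hG₂ : ∀ a, Periodic (G a) N) (hN : 0 < N) (hM : ∀ a b, |G a b| ≤ M) {l u l' u' : ℤ}
    (hlu : l ≤ u) (hlu' : l' ≤ u') :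
    |∑ a ∈ Ico l u, ∑ b ∈ Ico l' u', G a b -
        (u - l) * (u' - l') / N ^ 2 * ∑ c ∈ range N, ∑ d ∈ range N, G c d|
      ≤ N * M * ((u - l) + (u' - l')) := by
  set H : ℤ → ℝ := fun a => ∑ d ∈ range N, G a d
  have hN' : (0 : ℝ) < N := Nat.cast_pos.2 hN
  have hrow : ∀ a, |∑ b ∈ Ico l' u', G a b - (u' - l') / N * H a| ≤ N * M := fun a =>
    (hG₂ a).abs_sum_Ico_sub_le hN (hM a) hlu'
  have hH : Periodic H N := fun a => sum_congr rfl fun d _ => hG₁ d a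
  have hHM : ∀ a, |H a| ≤ N * M := fun a => by
    simpa using (abs_sum_le_sum_abs _ _).trans (sum_le_sum fun d (_ : d ∈ range N) => hM a d)
  have hcol := hH.abs_sum_Ico_sub_le hN hHM hlu
  have hsplit : ∑ a ∈ Ico l u, ∑ b ∈ Ico l' u', G a b -
        (u - l) * (u' - l') / N ^ 2 * ∑ c ∈ range N, H c =
      ∑ a ∈ Ico l u, (∑ b ∈ Ico l' u', G a b - (u' - l') / N * H a) +
        (u' - l') / N * (∑ a ∈ Ico l u, H a - (u - l) / N * ∑ c ∈ range N, H c) := by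
    rw [sum_sub_distrib, ← mul_sum]; field_simp; ring
  have hlen : ((#(Ico l u) : ℕ) : ℝ) = u - l := by
    rw [Int.card_Ico, ← Int.cast_natCast, Int.toNat_of_nonneg (sub_nonneg.2 hlu), Int.cast_sub]
  calc _ = |_| := congrArg abs hsplit
    _ ≤ (u - l) * (N * M) + (u' - l') / N * (N * (N * M)) := by
      refine (abs_add_le _ _).trans (add_le_add ?_ ?_)
      · refine (abs_sum_le_sum_abs _ _).trans ((sum_le_sum fun a _ => hrow a).trans ?_)
        rw [sum_const, nsmul_eq_mul, hlen]
      · have : (l' : ℝ) ≤ u' := by exact_mod_cast hlu'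
        rw [abs_mul, abs_of_nonneg (by positivity)]
        gcongr
    _ = N * M * ((u - l) + (u' - l')) := by field_simp

theorem abs_le_of_sum_range_sum_range_eq_sq_mul (hN : 0 < N) (hM : ∀ a b, |G a b| ≤ M) {μ : ℝ}
    (hμ : ∑ c ∈ range N, ∑ d ∈ range N, G c d = N ^ 2 * μ) : |μ| ≤ M := by
  have hsum : |∑ c ∈ range N, ∑ d ∈ range N, G c d| ≤ N ^ 2 * M :=
    calc _ ≤ ∑ c ∈ range N, ∑ d ∈ range N, |G c d| :=
          (abs_sum_le_sum_abs _ _).trans (sum_le_sum fun c _ => abs_sum_le_sum_abs _ _)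
      _ ≤ ∑ c ∈ range N, ∑ d ∈ range N, M := by gcongr with c _ d _; exact hM c d
      _ = N ^ 2 * M := by simp; ring
  rw [hμ, abs_mul, abs_of_pos (by positivity)] at hsum
  exact le_of_mul_le_mul_left hsum (by positivity)

theorem abs_sum_Ico_ceil_sub_le_of_periodic (hG₁ : ∀ b, Periodic (G · b) N)
    (hG₂ : ∀ a, Periodic (G a) N) (hN : 0 < N) (hM : ∀ a b, |G a b| ≤ M) {μ : ℝ}
    (hμ : ∑ c ∈ range N, ∑ d ∈ range N, G c d = N ^ 2 * μ) {y z : ℝ} (hy : 0 < y) (hz : 0 < z) :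
    |∑ a ∈ Ico (1 - ⌈y⌉) ⌈y⌉, ∑ b ∈ Ico (1 - ⌈z⌉) ⌈z⌉, G a b - 4 * (y * z) * μ|
      ≤ (N + 1) * M * (2 * y + 2 * z + 2) := by
  have hN' : (0 : ℝ) < N := Nat.cast_pos.2 hN
  have hμM := abs_le_of_sum_range_sum_range_eq_sq_mul hN hM hμ
  have hy₁ : 1 - ⌈y⌉ ≤ ⌈y⌉ := by have := Int.ceil_pos.2 hy; omega
  have hz₁ : 1 - ⌈z⌉ ≤ ⌈z⌉ := by have := Int.ceil_pos.2 hz; omega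
  have hy₂ := Int.abs_ceil_sub_one_sub_ceil_sub_two_mul_le y
  have hz₂ := Int.abs_ceil_sub_one_sub_ceil_sub_two_mul_le z
  set Ly : ℝ := (⌈y⌉ : ℤ) - ((1 - ⌈y⌉ : ℤ) : ℝ)
  set Lz : ℝ := (⌈z⌉ : ℤ) - ((1 - ⌈z⌉ : ℤ) : ℝ)
  set S := ∑ a ∈ Ico (1 - ⌈y⌉) ⌈y⌉, ∑ b ∈ Ico (1 - ⌈z⌉) ⌈z⌉, G a b
  have hbox : |S - Ly * Lz * μ| ≤ N * M * (Ly + Lz) := by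
    have := abs_sum_Ico_Ico_sub_le_of_periodic hG₁ hG₂ hN hM hy₁ hz₁
    rwa [hμ, show Ly * Lz / N ^ 2 * (N ^ 2 * μ) = Ly * Lz * μ by field_simp] at this
  have hprod := abs_mul_sub_mul_le hy₂ hz₂
  rw [abs_of_pos (by positivity : 0 < 2 * y), abs_of_pos (by positivity : 0 < 2 * z)] at hprod
  have hLy := (abs_le.1 hy₂).2
  have hLz := (abs_le.1 hz₂).2
  have hM0 : 0 ≤ M := (abs_nonneg _).trans hμM
  calc |S - 4 * (y * z) * μ| = |(S - Ly * Lz * μ) + (Ly * Lz - 2 * y * (2 * z)) * μ| := by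
        ring_nf
    _ ≤ |S - Ly * Lz * μ| + |Ly * Lz - 2 * y * (2 * z)| * |μ| := by
        rw [← abs_mul]; exact abs_add_le _ _
    _ ≤ N * M * (Ly + Lz) + (2 * y + 2 * z + 1) * M := by gcongr
    _ ≤ N * M * (2 * y + 2 * z + 2) + (2 * y + 2 * z + 2) * M := by
        gcongr (N : ℝ) * M * ?_ + ?_ * M <;> linarith
    _ = (N + 1) * M * (2 * y + 2 * z + 2) := by ring

theorem abs_finsum_naiveHeight_lt_sub_le_of_periodic (hG₁ : ∀ b, Periodic (G · b) N)
    (hG₂ : ∀ a, Periodic (G a) N) (hN : 0 < N) (hM : ∀ a b, |G a b| ≤ M) {μ : ℝ}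
    (hμ : ∑ c ∈ range N, ∑ d ∈ range N, G c d = N ^ 2 * μ) {X : ℝ} (hX : 1 ≤ X) :
    |(∑ᶠ q ∈ {q : ℤ × ℤ | naiveHeight q.1 q.2 < X}, G q.1 q.2) -
        (2 : ℝ) ^ (4 / 3 : ℝ) * (3 : ℝ) ^ (-(3 / 2) : ℝ) * X ^ (5 / 6 : ℝ) * μ|
      ≤ 6 * (N + 1) * M * X ^ (1 / 2 : ℝ) := by
  have hM0 : 0 ≤ M := (abs_nonneg _).trans (hM 0 0)
  have hX₀ : 0 ≤ X := by linarith
  have hs : 1 ≤ X ^ (1 / 2 : ℝ) := Real.one_le_rpow hX (by norm_num)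
  have hy : (X / 4) ^ (3⁻¹ : ℝ) ≤ X ^ (1 / 2 : ℝ) :=
    (Real.rpow_le_rpow (by positivity) (by linarith) (by norm_num)).trans
      (Real.rpow_le_rpow_of_exponent_le hX (by norm_num))
  have hz : (X / 27) ^ (2⁻¹ : ℝ) ≤ X ^ (1 / 2 : ℝ) := by
    rw [one_div]; exact Real.rpow_le_rpow (by positivity) (by linarith) (by norm_num)
  rw [setOf_naiveHeight_lt hX₀, finsum_mem_coe_finset, sum_product,
    ← four_mul_rpow_three_inv_mul_rpow_two_inv hX₀]
  refine (abs_sum_Ico_ceil_sub_le_of_periodic hG₁ hG₂ hN hM hμ (by positivity)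
    (by positivity)).trans ?_
  calc _ ≤ (N + 1) * M * (2 * X ^ (1 / 2 : ℝ) + 2 * X ^ (1 / 2 : ℝ) + 2 * X ^ (1 / 2 : ℝ)) := by
        gcongr; linarith
    _ = 6 * (N + 1) * M * X ^ (1 / 2 : ℝ) := by ring

end DoublyPeriodic

theorem legendreSym.abs_le_one (p : ℕ) [Fact p.Prime] (a : ℤ) : |(legendreSym p a : ℝ)| ≤ 1 := by
  rcases quadraticChar_isQuadratic (ZMod p) a with h | h | h <;> simp [legendreSym, h]

theorem abs_ellp_le (p : ℕ) (hp : p.Prime) (a b : ℤ) : |ellp p hp a b| ≤ p := by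
  have := Fact.mk hp
  have hp1 : (1 : ℝ) ≤ p := by exact_mod_cast hp.one_le
  rw [ellp, abs_mul, abs_neg, abs_of_nonneg (by positivity)]
  calc _ ≤ 1 * ∑ x ∈ range p, (1 : ℝ) := by
        gcongr
        · exact Real.rpow_le_one_of_one_le_of_nonpos hp1 (by norm_num)
        · exact (abs_sum_le_sum_abs _ _).trans (sum_le_sum fun x _ => legendreSym.abs_le_one p _)
    _ = p := by simp

theorem periodic_ellp_left (p : ℕ) (hp : p.Prime) (b : ℤ) : Periodic (ellp p hp · b) p :=
  fun a => by simp [ellp, legendreSym]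

theorem periodic_ellp_right (p : ℕ) (hp : p.Prime) (a : ℤ) : Periodic (ellp p hp a) p :=
  fun b => by simp [ellp, legendreSym]

theorem sum_range_sum_range_prod_ellp_pow {ι : Type*} [Fintype ι] (k : ℕ) {p : ι → ℕ}
    (hp : ∀ j, (p j).Prime) (hcop : Pairwise (Nat.Coprime on p)) :
    ∑ a ∈ range (∏ j, p j), ∑ b ∈ range (∏ j, p j), ∏ j, ellp (p j) (hp j) a b ^ k =
      ((∏ j, p j : ℕ) : ℝ) ^ 2 * ∏ j, alphaMoment (p j) (hp j) k := by
  have : ∀ j, NeZero (p j) := fun j => ⟨(hp j).ne_zero⟩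
  rw [sum_range_sum_range_prod_eq_prod_of_periodic hcop
      (f := fun j a b => ellp (p j) (hp j) a b ^ k)
      (fun j b => (periodic_ellp_left _ _ b).comp (· ^ k))
      (fun j a => (periodic_ellp_right _ _ a).comp (· ^ k)),
    Nat.cast_prod, ← prod_pow, ← prod_mul_distrib]
  refine prod_congr rfl fun j _ => ?_
  rw [alphaMoment, mul_inv_cancel_left₀ (pow_ne_zero 2 (Nat.cast_ne_zero.2 (hp j).ne_zero))]

theorem moments_ellp_general (k : ℕ) (r : ℕ) (p : Fin r → ℕ)
    (hp : ∀ j, (p j).Prime) (hinj : Function.Injective p) :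
    ∃ C : ℝ, 0 < C ∧ ∀ X : ℝ, 1 ≤ X →
      |(∑ᶠ q ∈ {q : ℤ × ℤ | naiveHeight q.1 q.2 < X}, ∏ j, ellp (p j) (hp j) q.1 q.2 ^ k) -
        (2 : ℝ) ^ ((4 / 3 : ℝ)) * (3 : ℝ) ^ (-(3 / 2) : ℝ) * X ^ ((5 / 6 : ℝ)) *
          ∏ j, alphaMoment (p j) (hp j) k|
      ≤ C * X ^ ((1 / 2 : ℝ)) := by
  have hcop : Pairwise (Nat.Coprime on p) := fun i j hij =>
    (Nat.coprime_primes (hp i) (hp j)).2 (hinj.ne hij)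
  have hN : 0 < ∏ j, p j := prod_pos fun j _ => (hp j).pos
  have hdvd : ∀ j ∈ univ, (p j : ℤ) ∣ ((∏ j, p j : ℕ) : ℤ) := fun j hj => by
    exact_mod_cast dvd_prod_of_mem p hj
  have hG₁ : ∀ b, Periodic (fun a => ∏ j, ellp (p j) (hp j) a b ^ k) (∏ j, p j : ℕ) := fun b =>
    periodic_prod_of_dvd _ (fun j _ => (periodic_ellp_left _ _ b).comp (· ^ k)) hdvd
  have hG₂ : ∀ a, Periodic (fun b => ∏ j, ellp (p j) (hp j) a b ^ k) (∏ j, p j : ℕ) := fun a =>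
    periodic_prod_of_dvd _ (fun j _ => (periodic_ellp_right _ _ a).comp (· ^ k)) hdvd
  have hM : ∀ a b, |∏ j, ellp (p j) (hp j) a b ^ k| ≤ ∏ j, (p j : ℝ) ^ k := fun a b => by
    rw [abs_prod]
    exact prod_le_prod (fun j _ => abs_nonneg _) fun j _ => by
      rw [abs_pow]; exact pow_le_pow_left₀ (abs_nonneg _) (abs_ellp_le _ _ _ _) k
  have hM₀ : 0 < ∏ j, (p j : ℝ) ^ k := prod_pos fun j _ => pow_pos (Nat.cast_pos.2 (hp j).pos) k
  exact ⟨_, by positivity, fun X hX =>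
    abs_finsum_naiveHeight_lt_sub_le_of_periodic (G := fun a b => ∏ j, ellp (p j) (hp j) a b ^ k)
      hG₁ hG₂ hN hM (sum_range_sum_range_prod_ellp_pow k hp hcop) hX⟩

/-- Moments of products of the coefficients `ℓ_{p_j}(a,b)` over all pairs of height
less than `X`:
`∑_{h(a,b)<X} ∏_j ℓ_{p_j}(a,b)^k = 2^{4/3} 3^{-3/2} X^{5/6} ∏_j α(p_j,k) + O(X^{1/2})`. -/
theorem moments_ellp (k : ℕ) (hk : 1 ≤ k) (r : ℕ) (p : Fin r → ℕ)
    (hp : ∀ j, (p j).Prime) (hp3 : ∀ j, 3 < p j) (hinj : Function.Injective p) :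
    ∃ C : ℝ, 0 < C ∧ ∀ X : ℝ, 1 ≤ X →
      |(∑ᶠ q ∈ {q : ℤ × ℤ | naiveHeight q.1 q.2 < X}, ∏ j, ellp (p j) (hp j) q.1 q.2 ^ k) -
        (2 : ℝ) ^ ((4 / 3 : ℝ)) * (3 : ℝ) ^ (-(3 / 2) : ℝ) * X ^ ((5 / 6 : ℝ)) *
          ∏ j, alphaMoment (p j) (hp j) k|
      ≤ C * X ^ ((1 / 2 : ℝ)) :=
  moments_ellp_general k r p hp hinj
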